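/- Σ_{n≥1} (21n − 8) / (n³ · C(2n,n)³) = π²/6, where the sum is over all integers n ≥ 1. -/

import Mathlib

/-! Wilf–Zeilberger method. With `F n k = (k! n! / (n + k + 1)!)² / C(2n, n)` and
`G n k = (2k + 3n + 3) / (2(2n + 1)) · F n k` one has the WZ identity
`F n k - F (n + 1) k = G n k - G n (k + 1)`. Summing it over `k ≥ n` (where `G n k → 0`) shows that
the staircase sums `T n = ∑_{k ≥ n} F n k` satisfy `T n - T (n + 1) = G n n + F (n + 1) n`, which
is the `(n + 1)`-st term of the series. Telescoping in `n`, the series equals `T 0 - lim T n`;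
here `T 0 = ζ(2)` because `F 0 k = 1 / (k + 1)²`, and `T n → 0` because `F n k ≤ 1 / (k + 1)²`
makes `T n` at most a tail of that same series. -/

open Filter Finset Topology Nat

section Telescoping

variable {G : Type*} [AddCommGroup G] [TopologicalSpace G] [IsTopologicalAddGroup G]

theorem tendsto_sum_range_sub_succ {u : ℕ → G} {l : G} (hu : Tendsto u atTop (𝓝 l)) :
    Tendsto (fun N => ∑ k ∈ range N, (u k - u (k + 1))) atTop (𝓝 (u 0 - l)) := by
  simpa only [sum_range_sub'] using hu.const_sub (u 0)

theorem Summable.hasSum_sub_succ [T2Space G] {u : ℕ → G} {l : G}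
    (hs : Summable fun k => u k - u (k + 1)) (hu : Tendsto u atTop (𝓝 l)) :
    HasSum (fun k => u k - u (k + 1)) (u 0 - l) :=
  hs.hasSum_iff_tendsto_nat.2 (tendsto_sum_range_sub_succ hu)

end Telescoping

theorem hasSum_sub_succ_of_nonneg {u : ℕ → ℝ} {l : ℝ} (h : ∀ k, 0 ≤ u k - u (k + 1))
    (hu : Tendsto u atTop (𝓝 l)) : HasSum (fun k => u k - u (k + 1)) (u 0 - l) :=
  (hasSum_iff_tendsto_nat_of_nonneg h _).2 (tendsto_sum_range_sub_succ hu)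

theorem hasSum_one_div_add_one_sq :
    HasSum (fun k : ℕ => 1 / ((k : ℝ) + 1) ^ 2) (Real.pi ^ 2 / 6) := by
  simpa using (hasSum_nat_add_iff' 1).2 hasSum_zeta_two

theorem Nat.cast_centralBinom_succ (n : ℕ) :
    ((n + 1).centralBinom : ℝ) = 2 * (2 * n + 1) / (n + 1) * n.centralBinom := by
  have h : ((n + 1 : ℕ) : ℝ) * (n + 1).centralBinom = 2 * (2 * n + 1) * n.centralBinom := by
    exact_mod_cast succ_mul_centralBinom_succ n
  rw [div_mul_eq_mul_div, eq_div_iff (by positivity)]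
  push_cast at h
  linarith

namespace ZetaTwoWZ

noncomputable def betaFact (n k : ℕ) : ℝ := (k ! * n ! : ℝ) / (n + k + 1)!

theorem betaFact_nonneg (n k : ℕ) : 0 ≤ betaFact n k := by unfold betaFact; positivity

theorem betaFact_zero_left (k : ℕ) : betaFact 0 k = 1 / (k + 1) := by
  rw [betaFact, zero_add, factorial_succ]
  push_cast [factorial_zero]
  field_simp

theorem betaFact_succ_left (n k : ℕ) :
    betaFact (n + 1) k = (n + 1) / (n + k + 2) * betaFact n k := by
  rw [betaFact, betaFact, show n + 1 + k + 1 = n + k + 1 + 1 by ring, factorial_succ (n + k + 1),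
    factorial_succ n]
  push_cast
  field_simp
  ring

theorem betaFact_succ_right (n k : ℕ) :
    betaFact n (k + 1) = (k + 1) / (n + k + 2) * betaFact n k := by
  rw [betaFact, betaFact, show n + (k + 1) + 1 = n + k + 1 + 1 by ring, factorial_succ (n + k + 1),
    factorial_succ k]
  push_cast
  field_simp
  ring

theorem betaFact_self (n : ℕ) : betaFact n n = 1 / ((2 * n + 1) * n.centralBinom) := by
  have h := Nat.add_choose_mul_factorial_mul_factorial n n
  rw [← two_mul, ← centralBinom_eq_two_mul_choose] at h
  rw [betaFact, ← two_mul, factorial_succ, ← h]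
  push_cast
  field_simp

theorem betaFact_le (n k : ℕ) : betaFact n k ≤ 1 / (k + 1) := by
  have h : ((k + 1)! * n ! : ℝ) ≤ (n + k + 1)! := by
    rw [show n + k + 1 = k + 1 + n by ring]
    exact_mod_cast Nat.le_of_dvd (factorial_pos _) (factorial_mul_factorial_dvd_factorial_add _ _)
  rw [factorial_succ] at h
  push_cast at h
  rw [betaFact, div_le_div_iff₀ (by positivity) (by positivity)]
  linarith

noncomputable def wzF (n k : ℕ) : ℝ := betaFact n k ^ 2 / n.centralBinom

noncomputable def wzG (n k : ℕ) : ℝ := (2 * k + 3 * n + 3) / (2 * (2 * n + 1)) * wzF n k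

theorem wzF_nonneg (n k : ℕ) : 0 ≤ wzF n k := by unfold wzF; positivity

theorem wzG_nonneg (n k : ℕ) : 0 ≤ wzG n k := by
  unfold wzG; have := wzF_nonneg n k; positivity

theorem wzF_zero_left (k : ℕ) : wzF 0 k = 1 / ((k : ℝ) + 1) ^ 2 := by
  simp [wzF, betaFact_zero_left]

theorem wzF_le (n k : ℕ) : wzF n k ≤ 1 / ((k : ℝ) + 1) ^ 2 := by
  have hC : (1 : ℝ) ≤ n.centralBinom := by exact_mod_cast centralBinom_pos n
  calc wzF n k ≤ betaFact n k ^ 2 := div_le_self (sq_nonneg _) hC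
    _ ≤ (1 / ((k : ℝ) + 1)) ^ 2 := pow_le_pow_left₀ (betaFact_nonneg n k) (betaFact_le n k) 2
    _ = 1 / ((k : ℝ) + 1) ^ 2 := by rw [one_div_pow]

theorem wzF_sub_wzF_succ_left (n k : ℕ) :
    wzF n k - wzF (n + 1) k = wzG n k - wzG n (k + 1) := by
  have hC : (0 : ℝ) < n.centralBinom := by exact_mod_cast centralBinom_pos n
  simp only [wzG, wzF, betaFact_succ_left, betaFact_succ_right, Nat.cast_centralBinom_succ]
  push_cast
  field_simp
  ring

theorem summable_wzF (n : ℕ) : Summable (wzF n) :=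
  hasSum_one_div_add_one_sq.summable.of_nonneg_of_le (wzF_nonneg n) (wzF_le n)

theorem tendsto_wzG_atTop (n : ℕ) : Tendsto (wzG n) atTop (𝓝 0) := by
  have hbound := (tendsto_one_div_add_atTop_nhds_zero_nat).const_mul (3 * ((n : ℝ) + 1))
  rw [mul_zero] at hbound
  refine squeeze_zero (wzG_nonneg n) (fun k => ?_) hbound
  have hcoeff : (2 * k + 3 * n + 3 : ℝ) / (2 * (2 * n + 1)) ≤ 3 * (n + 1) * (k + 1) := by
    rw [div_le_iff₀ (by positivity)]
    have hn : (0 : ℝ) ≤ n := n.cast_nonneg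
    have hk : (0 : ℝ) ≤ k := k.cast_nonneg
    nlinarith [mul_nonneg hn hk, mul_nonneg (mul_nonneg hn hn) hk, mul_nonneg hn hn]
  calc wzG n k ≤ 3 * (n + 1) * (k + 1) * (1 / ((k : ℝ) + 1) ^ 2) :=
        mul_le_mul hcoeff (wzF_le n k) (wzF_nonneg n k) (by positivity)
    _ = 3 * ((n : ℝ) + 1) * (1 / ((k : ℝ) + 1)) := by field_simp

noncomputable def staircase (n : ℕ) : ℝ := ∑' k, wzF n (k + n)

theorem staircase_zero : staircase 0 = Real.pi ^ 2 / 6 := by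
  simp only [staircase, add_zero, wzF_zero_left, hasSum_one_div_add_one_sq.tsum_eq]

theorem staircase_sub_succ (n : ℕ) :
    staircase n - staircase (n + 1) = wzG n n + wzF (n + 1) n := by
  have hs (m : ℕ) : Summable fun k => wzF m (k + n) := (summable_nat_add_iff n).2 (summable_wzF m)
  have hpeel : ∑' k, wzF (n + 1) (k + n) = wzF (n + 1) n + staircase (n + 1) := by
    rw [(hs (n + 1)).tsum_eq_zero_add, staircase, zero_add]
    simp only [add_assoc, add_comm 1 n]
  have hs' := (hs n).sub (hs (n + 1))
  have htele : HasSum (fun k => wzF n (k + n) - wzF (n + 1) (k + n)) (wzG n n) := by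
    have hG : (fun k => wzF n (k + n) - wzF (n + 1) (k + n)) =
        fun k => wzG n (k + n) - wzG n (k + 1 + n) := by
      ext k
      rw [wzF_sub_wzF_succ_left, add_right_comm]
    rw [hG] at hs' ⊢
    simpa using hs'.hasSum_sub_succ ((tendsto_wzG_atTop n).comp (tendsto_add_atTop_nat n))
  have hdiff := (hs n).tsum_sub (hs (n + 1))
  rw [htele.tsum_eq, hpeel] at hdiff
  rw [staircase]
  linarith

theorem tendsto_staircase_atTop : Tendsto staircase atTop (𝓝 0) := by
  have hf := hasSum_one_div_add_one_sq.summable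
  refine squeeze_zero (fun n => tsum_nonneg fun k => wzF_nonneg n (k + n)) (fun n => ?_)
    (tendsto_sum_nat_add fun k : ℕ => 1 / ((k : ℝ) + 1) ^ 2)
  exact Summable.tsum_le_tsum (fun k => wzF_le n (k + n))
    ((summable_nat_add_iff n).2 (summable_wzF n)) ((summable_nat_add_iff n).2 hf)

theorem wzG_self_add_wzF_succ_left (n : ℕ) :
    wzG n n + wzF (n + 1) n =
      (21 * ((n : ℝ) + 1) - 8) / (((n : ℝ) + 1) ^ 3 * ((n + 1).centralBinom : ℝ) ^ 3) := by
  have hC : (0 : ℝ) < n.centralBinom := by exact_mod_cast centralBinom_pos n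
  simp only [wzG, wzF, betaFact_succ_left, betaFact_self, Nat.cast_centralBinom_succ]
  field_simp
  ring

end ZetaTwoWZ

open ZetaTwoWZ

theorem upside_down_formula_43 :
    ∑' n : ℕ, (21 * ((n : ℝ) + 1) - 8) /
        (((n : ℝ) + 1) ^ 3 * ((n + 1).centralBinom : ℝ) ^ 3)
      = Real.pi ^ 2 / 6 := by
  have hterm (n : ℕ) : (21 * ((n : ℝ) + 1) - 8) /
      (((n : ℝ) + 1) ^ 3 * ((n + 1).centralBinom : ℝ) ^ 3) =
        staircase n - staircase (n + 1) := by
    rw [staircase_sub_succ, wzG_self_add_wzF_succ_left]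
  have hnonneg (n : ℕ) : 0 ≤ staircase n - staircase (n + 1) := by
    rw [staircase_sub_succ]
    exact add_nonneg (wzG_nonneg n n) (wzF_nonneg (n + 1) n)
  simp only [hterm]
  rw [(hasSum_sub_succ_of_nonneg hnonneg tendsto_staircase_atTop).tsum_eq, staircase_zero, sub_zero]
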